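/- Let ⪯ be an admissible order on ℕⁿ. Then the up-component composition order ⪯^c on ℕ^{2n} = ℕⁿ×ℕⁿ, defined by (α,β) ≺^c (γ,δ) iff α+β^op ≺ γ+δ^op, or (α+β^op = γ+δ^op and β^op ≺ δ^op), is an admissible order on ℕ^{2n}. -/

import Mathlib

open TensorProduct MulOpposite

set_option synthInstance.maxHeartbeats 1000000
set_option maxHeartbeats 1000000

noncomputable section

/-- An admissible order on a commutative monoid of exponents: a total order for which `0`
is smallest and which is compatible with addition. -/
def IsAdmissible {E : Type*} [AddCommMonoid E] (le : E → E → Prop) : Prop :=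
  (∀ a b, le a b ∨ le b a) ∧
  (∀ a b, le a b → le b a → a = b) ∧
  (∀ a b c, le a b → le b c → le a c) ∧
  (∀ a, le 0 a) ∧
  (∀ a b c, le a b → le (a + c) (b + c))

/-- The strict part of an order. -/
def ltOf {E : Type*} (le : E → E → Prop) (a b : E) : Prop := le a b ∧ a ≠ b

/-- `α^op`: the reversal of a multi-exponent. -/
def expRev {n : ℕ} (α : Fin n → ℕ) : Fin n → ℕ := fun i => α i.rev

/-- The order `⪯^op` on exponents: `α ⪯^op β ↔ α^op ⪯ β^op`. -/
def opOrd {n : ℕ} (le : (Fin n → ℕ) → (Fin n → ℕ) → Prop) :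
    (Fin n → ℕ) → (Fin n → ℕ) → Prop := fun a b => le (expRev a) (expRev b)

/-- The up-component composition order `⪯^c` on `ℕⁿ × ℕⁿ`. -/
def upCompOrd {n : ℕ} (le : (Fin n → ℕ) → (Fin n → ℕ) → Prop) :
    ((Fin n → ℕ) × (Fin n → ℕ)) → ((Fin n → ℕ) × (Fin n → ℕ)) → Prop := fun a b =>
  a = b ∨ ltOf le (a.1 + expRev a.2) (b.1 + expRev b.2) ∨
    (a.1 + expRev a.2 = b.1 + expRev b.2 ∧ ltOf le (expRev a.2) (expRev b.2))

/-- The down-component composition order `⪯_c` on `ℕⁿ × ℕⁿ`. -/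
def downCompOrd {n : ℕ} (le : (Fin n → ℕ) → (Fin n → ℕ) → Prop) :
    ((Fin n → ℕ) × (Fin n → ℕ)) → ((Fin n → ℕ) × (Fin n → ℕ)) → Prop := fun a b =>
  a = b ∨ ltOf le (a.1 + expRev a.2) (b.1 + expRev b.2) ∨
    (a.1 + expRev a.2 = b.1 + expRev b.2 ∧ ltOf le a.1 b.1)

/-- The elimination order `⪯*` on `ℕⁿ × ℕⁿ` built from `⪯` and `⪯^op`. -/
def elimUpOrd {n : ℕ} (le : (Fin n → ℕ) → (Fin n → ℕ) → Prop) :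
    ((Fin n → ℕ) × (Fin n → ℕ)) → ((Fin n → ℕ) × (Fin n → ℕ)) → Prop := fun a b =>
  a = b ∨ ltOf le a.1 b.1 ∨ (a.1 = b.1 ∧ ltOf (opOrd le) a.2 b.2)

/-- The elimination order `⪯_*` on `ℕⁿ × ℕⁿ` built from `⪯` and `⪯^op`. -/
def elimDownOrd {n : ℕ} (le : (Fin n → ℕ) → (Fin n → ℕ) → Prop) :
    ((Fin n → ℕ) × (Fin n → ℕ)) → ((Fin n → ℕ) × (Fin n → ℕ)) → Prop := fun a b =>
  a = b ∨ ltOf (opOrd le) a.2 b.2 ∨ (a.2 = b.2 ∧ ltOf le a.1 b.1)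

/-- The strict TOP (term over position) order on `I × Fin m` built from a strict order on `I`. -/
def topLt {I : Type*} {m : ℕ} (lt : I → I → Prop) (a b : I × Fin m) : Prop :=
  lt a.1 b.1 ∨ (a.1 = b.1 ∧ b.2 < a.2)

/-- The strict POT (position over term) order on `I × Fin m` built from a strict order on `I`. -/
def potLt {I : Type*} {m : ℕ} (lt : I → I → Prop) (a b : I × Fin m) : Prop :=
  b.2 < a.2 ∨ (a.2 = b.2 ∧ lt a.1 b.1)

/-- The standard monomial `x^α = x₁^{α₁} ⋯ xₙ^{αₙ}` (ordered product). -/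
def stdMon {n : ℕ} {A : Type*} [Monoid A] (x : Fin n → A) (α : Fin n → ℕ) : A :=
  ((List.finRange n).map fun i => x i ^ α i).prod

/-- The quantum relation `xⱼxᵢ − qᵢⱼ xᵢxⱼ − pᵢⱼ` (for `i < j`) as an element of the free
algebra; here `pᵢⱼ` is recorded by its coefficients on standard monomials. -/
def quantumRel (k : Type*) [Field k] {n : ℕ} (q : Fin n → Fin n → k)
    (p : Fin n → Fin n → ((Fin n → ℕ) →₀ k)) (i j : Fin n) : FreeAlgebra k (Fin n) :=
  FreeAlgebra.ι k j * FreeAlgebra.ι k i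
    - q i j • (FreeAlgebra.ι k i * FreeAlgebra.ι k j)
    - (p i j).sum fun γ c => c • stdMon (FreeAlgebra.ι k) γ

/-- `R` is the PBW algebra `k{x₁,…,xₙ; Q, ⪯}`, where the relation for `i < j` reads
`xⱼxᵢ = qᵢⱼ xᵢxⱼ + pᵢⱼ`: the order is admissible, the `q`'s are nonzero, the tails `p` are
bounded by `⪯`, the canonical map from the free algebra is surjective with kernel the two-sided
ideal generated by the relations, and the standard monomials form a `k`-basis. -/
def IsPBW (k : Type*) [Field k] {n : ℕ} (R : Type*) [Ring R] [Algebra k R]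
    (x : Fin n → R) (q : Fin n → Fin n → k) (p : Fin n → Fin n → ((Fin n → ℕ) →₀ k))
    (le : (Fin n → ℕ) → (Fin n → ℕ) → Prop) : Prop :=
  IsAdmissible le ∧
  (∀ i j : Fin n, i < j → q i j ≠ 0) ∧
  (∀ i j : Fin n, i < j → ∀ γ ∈ (p i j).support,
      ltOf le γ (Pi.single i 1 + Pi.single j 1)) ∧
  Function.Surjective (FreeAlgebra.lift k x) ∧
  (∀ a : FreeAlgebra k (Fin n),
      FreeAlgebra.lift k x a = 0 ↔
        a ∈ TwoSidedIdeal.span {y | ∃ i j : Fin n, i < j ∧ y = quantumRel k q p i j}) ∧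
  LinearIndependent k (stdMon x) ∧
  Submodule.span k (Set.range (stdMon x)) = ⊤

section Env

variable {k R : Type*} [Field k] [Ring R] [Algebra k R]

/-- The left `R^env = R ⊗[k] Rᵐᵒᵖ`-module structure on `R`, given by
`(r ⊗ r') • f = r * f * r'`. -/
noncomputable instance (priority := 100) envModule : Module (R ⊗[k] Rᵐᵒᵖ) R :=
  TensorProduct.Algebra.module

/-- The multiplication map `𝔪 : R^env → R`, `r ⊗ r' ↦ r r'`, as a morphism of left
`R^env`-modules. -/
noncomputable def mulE (k R : Type*) [Field k] [Ring R] [Algebra k R] :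
    (R ⊗[k] Rᵐᵒᵖ) →ₗ[R ⊗[k] Rᵐᵒᵖ] R :=
  LinearMap.toSpanSingleton _ _ (1 : R)

/-- The map `𝔪^s : (R^env)^s → R^s` applying `𝔪` coordinatewise, as a morphism of left
`R^env`-modules. -/
noncomputable def mulS (k R : Type*) [Field k] [Ring R] [Algebra k R] (s : ℕ) :
    (Fin s → R ⊗[k] Rᵐᵒᵖ) →ₗ[R ⊗[k] Rᵐᵒᵖ] (Fin s → R) :=
  LinearMap.pi fun i => (mulE k R).comp (LinearMap.proj i)

/-- `f ⊗ 1 := (f₁ ⊗ 1, …, f_s ⊗ 1)`. -/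
def tensorOne (k : Type*) [Field k] {R : Type*} [Ring R] [Algebra k R] {s : ℕ}
    (f : Fin s → R) : Fin s → R ⊗[k] Rᵐᵒᵖ := fun i => f i ⊗ₜ[k] (1 : Rᵐᵒᵖ)

/-- `1 ⊗ f := (1 ⊗ f₁, …, 1 ⊗ f_s)`. -/
def oneTensor (k : Type*) [Field k] {R : Type*} [Ring R] [Algebra k R] {s : ℕ}
    (f : Fin s → R) : Fin s → R ⊗[k] Rᵐᵒᵖ := fun i => (1 : R) ⊗ₜ[k] op (f i)

/-- The map `(h₁,…,h_m) ↦ Σᵢ hᵢ • wᵢ`, whose kernel is the (two-sided/left) syzygy module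
of the family `w`. -/
noncomputable def syzMap (A : Type*) [Ring A] {M : Type*} [AddCommGroup M] [Module A M]
    {ι : Type*} [Fintype ι] (w : ι → M) : (ι → A) →ₗ[A] M where
  toFun h := ∑ l, h l • w l
  map_add' h h' := by simp [add_smul, Finset.sum_add_distrib]
  map_smul' a h := by simp [mul_smul, Finset.smul_sum]

end Env

/-- `e` is the exponent (leading index) of the nonzero element `h` of a free module of rank `m`
over an algebra with a standard-monomial basis `b` indexed by `I`, with respect to a strict
order `lt` on `I × Fin m`: the coordinate of `h` at `e` is nonzero and every other index with
nonzero coordinate is smaller. -/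
def IsExpOf {k R0 I : Type*} [Field k] [AddCommGroup R0] [Module k R0] {m : ℕ}
    (b : Module.Basis I k R0) (lt : I × Fin m → I × Fin m → Prop)
    (h : Fin m → R0) (e : I × Fin m) : Prop :=
  b.repr (h e.2) e.1 ≠ 0 ∧ ∀ β i, b.repr (h i) β ≠ 0 → (β, i) = e ∨ lt ((β, i)) e

/-- `G` is a Gröbner basis of the `A`-submodule `N` of the free module `(Fin m → R0)`:
`G ⊆ N \ {0}`, `G` generates `N` over `A`, and the leading exponent of every nonzero element
of `N` is a translate (by some `δ`) of the leading exponent of some element of `G`, in the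
same component.  Taking `A = R^env` acting on `R0 = R^env` gives left Gröbner bases, and
taking `A = R^env` acting on `R0 = R` gives two-sided Gröbner bases. -/
def IsGB {k R0 A I : Type*} [Field k] [AddCommGroup R0] [Module k R0] [Ring A] [Add I]
    {m : ℕ} [Module A (Fin m → R0)]
    (b : Module.Basis I k R0) (lt : I × Fin m → I × Fin m → Prop)
    (N : Submodule A (Fin m → R0)) (G : Set (Fin m → R0)) : Prop :=
  G ⊆ (N : Set (Fin m → R0)) \ {0} ∧ Submodule.span A G = N ∧
  ∀ h, h ∈ N → h ≠ 0 →
    ∃ g ∈ G, ∃ γ δ i, IsExpOf b lt g (γ, i) ∧ IsExpOf b lt h (γ + δ, i)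

end

lemma expRev_add' {n : ℕ} (a b : Fin n → ℕ) : expRev (a + b) = expRev a + expRev b := rfl

lemma expRev_inj' {n : ℕ} {a b : Fin n → ℕ} (h : expRev a = expRev b) : a = b := by
  funext i
  have := congrFun h i.rev
  simpa [expRev, Fin.rev_rev] using this

/-- If `⪯` is an admissible order on `ℕⁿ`, then the up-component composition
order `⪯^c` is an admissible order on `ℕ^{2n} = ℕⁿ × ℕⁿ`. -/
theorem upCompOrd_isAdmissible {n : ℕ} (le : (Fin n → ℕ) → (Fin n → ℕ) → Prop)
    (hle : IsAdmissible le) : IsAdmissible (upCompOrd le) := by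
  obtain ⟨tot, anti, tra, zer, addc⟩ := hle
  have lt_trans : ∀ a b c, ltOf le a b → ltOf le b c → ltOf le a c := by
    rintro a b c ⟨h1, h2⟩ ⟨h3, h4⟩
    refine ⟨tra _ _ _ h1 h3, ?_⟩
    rintro rfl
    exact h2 (anti _ _ h1 h3)
  -- key lemma for totality
  have key : ∀ a b : (Fin n → ℕ) × (Fin n → ℕ),
      le (a.1 + expRev a.2) (b.1 + expRev b.2) →
      upCompOrd le a b ∨ upCompOrd le b a := by
    intro a b h
    by_cases hs : a.1 + expRev a.2 = b.1 + expRev b.2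
    · rcases tot (expRev a.2) (expRev b.2) with h2 | h2
      · by_cases h3 : expRev a.2 = expRev b.2
        · left; left
          have h4 : a.2 = b.2 := expRev_inj' h3
          have h5 : a.1 = b.1 := by
            rw [h3] at hs; exact add_right_cancel hs
          exact Prod.ext h5 h4
        · exact Or.inl (Or.inr (Or.inr ⟨hs, h2, h3⟩))
      · by_cases h3 : expRev b.2 = expRev a.2
        · left; left
          have h4 : a.2 = b.2 := expRev_inj' h3.symm
          have h5 : a.1 = b.1 := by
            rw [h3.symm] at hs; exact add_right_cancel hs
          exact Prod.ext h5 h4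
        · exact Or.inr (Or.inr (Or.inr ⟨hs.symm, h2, h3⟩))
    · exact Or.inl (Or.inr (Or.inl ⟨h, hs⟩))
  refine ⟨?_, ?_, ?_, ?_, ?_⟩
  · -- totality
    intro a b
    rcases tot (a.1 + expRev a.2) (b.1 + expRev b.2) with h | h
    · exact key a b h
    · exact (key b a h).symm
  · -- antisymmetry
    rintro a b (rfl | ⟨h1, h2⟩ | ⟨h1, h2⟩) hba
    · rfl
    · rcases hba with rfl | h3 | h3
      · rfl
      · exact absurd rfl (lt_trans _ _ _ ⟨h1, h2⟩ h3).2
      · exact absurd h3.1 (Ne.symm h2)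
    · rcases hba with rfl | h3 | h3
      · rfl
      · exact absurd h1.symm h3.2
      · exact absurd rfl (lt_trans _ _ _ h2 h3.2).2
  · -- transitivity
    rintro a b c (rfl | hab | hab) hbc
    · exact hbc
    · rcases hbc with rfl | hbc | hbc
      · exact Or.inr (Or.inl hab)
      · exact Or.inr (Or.inl (lt_trans _ _ _ hab hbc))
      · exact Or.inr (Or.inl (hbc.1 ▸ hab))
    · rcases hbc with rfl | hbc | hbc
      · exact Or.inr (Or.inr hab)
      · exact Or.inr (Or.inl (hab.1 ▸ hbc))
      · exact Or.inr (Or.inr ⟨hab.1.trans hbc.1, lt_trans _ _ _ hab.2 hbc.2⟩)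
  · -- zero is least
    intro a
    by_cases h0 : a = 0
    · exact Or.inl h0.symm
    · refine Or.inr (Or.inl ⟨?_, ?_⟩)
      · exact zer _
      · intro h
        apply h0
        have hz : (0 : Fin n → ℕ) = a.1 + expRev a.2 := by
          simpa [expRev, show expRev (0 : Fin n → ℕ) = 0 from rfl] using h
        have h12 : a.1 = 0 ∧ expRev a.2 = 0 := by
          have hz' := hz.symm
          rwa [add_eq_zero] at hz'
        have h3 : a.2 = 0 := expRev_inj' (by simpa [show expRev (0 : Fin n → ℕ) = 0 from rfl] using h12.2)
        exact Prod.ext h12.1 h3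
  · -- compatibility with addition
    rintro a b c (rfl | ⟨h1, h2⟩ | ⟨h1, h2⟩)
    · exact Or.inl rfl
    · refine Or.inr (Or.inl ⟨?_, ?_⟩)
      · have : (a + c).1 + expRev (a + c).2
            = (a.1 + expRev a.2) + (c.1 + expRev c.2) := by
          show (a.1 + c.1) + expRev (a.2 + c.2) = _
          rw [expRev_add']; ring
        rw [this]
        have : (b + c).1 + expRev (b + c).2
            = (b.1 + expRev b.2) + (c.1 + expRev c.2) := by
          show (b.1 + c.1) + expRev (b.2 + c.2) = _
          rw [expRev_add']; ring
        rw [this]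
        exact addc _ _ _ h1
      · intro h
        apply h2
        have h' : (a.1 + expRev a.2) + (c.1 + expRev c.2)
            = (b.1 + expRev b.2) + (c.1 + expRev c.2) := by
          have ha : (a + c).1 + expRev (a + c).2
              = (a.1 + expRev a.2) + (c.1 + expRev c.2) := by
            show (a.1 + c.1) + expRev (a.2 + c.2) = _
            rw [expRev_add']; ring
          have hb : (b + c).1 + expRev (b + c).2
              = (b.1 + expRev b.2) + (c.1 + expRev c.2) := by
            show (b.1 + c.1) + expRev (b.2 + c.2) = _
            rw [expRev_add']; ring
          rw [← ha, ← hb, h]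
        exact add_right_cancel h'
    · refine Or.inr (Or.inr ⟨?_, ?_, ?_⟩)
      · show (a.1 + c.1) + expRev (a.2 + c.2) = (b.1 + c.1) + expRev (b.2 + c.2)
        rw [expRev_add', expRev_add']
        rw [show (a.1 + c.1) + (expRev a.2 + expRev c.2)
            = (a.1 + expRev a.2) + (c.1 + expRev c.2) by ring, h1]
        ring
      · show le (expRev (a.2 + c.2)) (expRev (b.2 + c.2))
        rw [expRev_add', expRev_add']
        exact addc _ _ _ h2.1
      · intro h
        apply h2.2
        have h' : expRev a.2 + expRev c.2 = expRev b.2 + expRev c.2 := by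
          rw [← expRev_add', ← expRev_add']; exact h
        exact add_right_cancel h'
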